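/- Let f : ℝ_sym^{n×n} → ℝ be C² with 0 ≤ ⟨∇²f(z)ξ,ξ⟩ ≤ Λ|ξ|²/(1+|z|²)^{1/2} for all symmetric z, ξ, and let f_j(z) = f(z) + (1/(2A_j j²))(1+|z|²)^{(n+1)/2} with A_j > 0, j ∈ ℕ. Then there exists c(n) > 0 such that for all vectors w, e ∈ ℝⁿ, all matrices M ∈ ℝ^{n×n}, and all symmetric z: ⟨∇²f_j(z)((Mw)⊙e), (Mw)⊙e⟩ ≤ |M|² [ Λ|w|²|e|²/(1+|z|²)^{1/2} + (c(n)/(A_j j²)) ( (1+|z|²)^{(n+1)/2} + |w|^{n+1}|e|^{n+1} ) ]. -/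

import Mathlib

/-!
The Hessian of `f_j` splits into that of `f`, bounded by hypothesis, and that of the radial
perturbation `κ (1 + |y|²)^p`, whose gradient is `2κp (1 + |y|²)^(p-1) y`; by Cauchy–Schwarz on
`⟨z, ξ⟩²` its quadratic form is at most `2κp(2p-1)(1 + |z|²)^(p-1) |ξ|²`. Both are evaluated at
`ξ = (Mw) ⊙ e`, where `|ξ| ≤ |M| |w| |e|`, and the remaining factor `(1 + |z|²)^(p-1) (|w||e|)²`
is split by the Young-type bound `t^(p-1) s ≤ (max t s)^p ≤ t^p + s^p` with `s = (|w||e|)²`,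
`p = (n+1)/2`.
-/

open scoped RealInnerProductSpace

/-- The symmetric tensor product `a ⊙ b = (abᵀ + baᵀ)/2`, as an element of the Euclidean space
of `n × n` arrays with the Hilbert–Schmidt inner product. -/
noncomputable def symProd {n : ℕ} (a b : EuclideanSpace ℝ (Fin n)) :
    EuclideanSpace ℝ (Fin n × Fin n) :=
  (EuclideanSpace.equiv (Fin n × Fin n) ℝ).symm (fun p => (a p.1 * b p.2 + a p.2 * b p.1) / 2)

/-- Matrix-vector multiplication, landing in Euclidean space. -/
noncomputable def matVec {n : ℕ} (M : Matrix (Fin n) (Fin n) ℝ) (w : EuclideanSpace ℝ (Fin n)) :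
    EuclideanSpace ℝ (Fin n) :=
  (EuclideanSpace.equiv (Fin n) ℝ).symm (M.mulVec (fun i => w i))

/-- The Hilbert–Schmidt (Frobenius) norm of a real `n × n` matrix. -/
noncomputable def frobNorm {n : ℕ} (M : Matrix (Fin n) (Fin n) ℝ) : ℝ :=
  Real.sqrt (∑ i, ∑ j, (M i j) ^ 2)

section Radial

variable {E : Type*} [NormedAddCommGroup E] [InnerProductSpace ℝ E]

theorem hasFDerivAt_one_add_norm_sq (z : E) :
    HasFDerivAt (fun y : E => 1 + ‖y‖ ^ 2) (2 • innerSL ℝ z) z := by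
  simpa using ((hasFDerivAt_id z).norm_sq).const_add (1 : ℝ)

theorem hasFDerivAt_one_add_norm_sq_rpow (q : ℝ) (z : E) :
    HasFDerivAt (fun y : E => (1 + ‖y‖ ^ 2) ^ q)
      ((q * (1 + ‖z‖ ^ 2) ^ (q - 1)) • (2 • innerSL ℝ z)) z :=
  (Real.hasDerivAt_rpow_const (Or.inl (by positivity))).comp_hasFDerivAt z
    (hasFDerivAt_one_add_norm_sq z)

theorem hasFDerivAt_one_add_norm_sq_rpow_smul (q : ℝ) (z : E) :
    HasFDerivAt (fun y : E => (1 + ‖y‖ ^ 2) ^ q • y)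
      (((1 + ‖z‖ ^ 2) ^ q) • ContinuousLinearMap.id ℝ E
        + ((q * (1 + ‖z‖ ^ 2) ^ (q - 1)) • (2 • innerSL ℝ z)).smulRight z) z :=
  (hasFDerivAt_one_add_norm_sq_rpow q z).smul (hasFDerivAt_id z)

theorem inner_fderiv_one_add_norm_sq_rpow_smul_le {q : ℝ} (hq : 0 ≤ q) (z ξ : E) :
    ⟪fderiv ℝ (fun y : E => (1 + ‖y‖ ^ 2) ^ q • y) z ξ, ξ⟫
      ≤ (1 + 2 * q) * (1 + ‖z‖ ^ 2) ^ q * ‖ξ‖ ^ 2 := by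
  rw [(hasFDerivAt_one_add_norm_sq_rpow_smul q z).fderiv]
  set T := 1 + ‖z‖ ^ 2
  have hform : ⟪(T ^ q • ContinuousLinearMap.id ℝ E
        + ((q * T ^ (q - 1)) • (2 • innerSL ℝ z)).smulRight z) ξ, ξ⟫
      = T ^ q * ‖ξ‖ ^ 2 + 2 * q * T ^ (q - 1) * ⟪z, ξ⟫ ^ 2 := by
    simp only [add_apply, smul_apply,
      ContinuousLinearMap.id_apply, ContinuousLinearMap.smulRight_apply, coe_innerSL_apply,
      nsmul_eq_mul, Nat.cast_ofNat, smul_eq_mul, inner_add_left, real_inner_smul_left,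
      real_inner_self_eq_norm_sq]
    ring
  have hcs : ⟪z, ξ⟫ ^ 2 ≤ T * ‖ξ‖ ^ 2 := by
    have := abs_real_inner_le_norm z ξ
    nlinarith [sq_abs ⟪z, ξ⟫, abs_nonneg ⟪z, ξ⟫, sq_nonneg ‖ξ‖]
  have hTq : T ^ (q - 1) * T = T ^ q := by
    rw [← Real.rpow_add_one (by positivity)]; ring_nf
  rw [hform]
  calc T ^ q * ‖ξ‖ ^ 2 + 2 * q * T ^ (q - 1) * ⟪z, ξ⟫ ^ 2
      ≤ T ^ q * ‖ξ‖ ^ 2 + 2 * q * T ^ (q - 1) * (T * ‖ξ‖ ^ 2) := by gcongr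
    _ = (1 + 2 * q) * T ^ q * ‖ξ‖ ^ 2 := by rw [← hTq]; ring

variable [CompleteSpace E]

theorem hasGradientAt_const_mul_one_add_norm_sq_rpow (κ p : ℝ) (y : E) :
    HasGradientAt (fun y : E => κ * (1 + ‖y‖ ^ 2) ^ p)
      ((2 * κ * p) • ((1 + ‖y‖ ^ 2) ^ (p - 1) • y)) y := by
  rw [hasGradientAt_iff_hasFDerivAt]
  refine ((hasFDerivAt_one_add_norm_sq_rpow p y).const_mul κ).congr_fderiv ?_
  ext v
  simp only [smul_apply, coe_innerSL_apply, nsmul_eq_mul, Nat.cast_ofNat,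
    smul_eq_mul, map_smul, InnerProductSpace.toDual_apply_apply]
  ring

theorem gradient_add_const_mul_one_add_norm_sq_rpow {f : E → ℝ} (hf : Differentiable ℝ f)
    (κ p : ℝ) :
    gradient (fun y => f y + κ * (1 + ‖y‖ ^ 2) ^ p)
      = fun y => gradient f y + (2 * κ * p) • ((1 + ‖y‖ ^ 2) ^ (p - 1) • y) :=
  funext fun y => HasGradientAt.gradient <| by
    rw [hasGradientAt_iff_hasFDerivAt, map_add]
    exact (hf y).hasGradientAt.hasFDerivAt.add
      (hasGradientAt_const_mul_one_add_norm_sq_rpow κ p y).hasFDerivAt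

theorem ContDiff.differentiable_gradient {f : E → ℝ} (hf : ContDiff ℝ 2 f) :
    Differentiable ℝ (gradient f) :=
  (InnerProductSpace.toDual ℝ E).symm.differentiable.comp
    ((hf.fderiv_right (m := 1) (by norm_num)).differentiable (by norm_num))

theorem inner_fderiv_gradient_add_const_mul_one_add_norm_sq_rpow_le {f : E → ℝ}
    (hf : ContDiff ℝ 2 f) {κ p : ℝ} (hκ : 0 ≤ κ) (hp : 1 ≤ p) (z ξ : E) :
    ⟪fderiv ℝ (gradient fun y => f y + κ * (1 + ‖y‖ ^ 2) ^ p) z ξ, ξ⟫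
      ≤ ⟪fderiv ℝ (gradient f) z ξ, ξ⟫
        + 2 * κ * p * (2 * p - 1) * (1 + ‖z‖ ^ 2) ^ (p - 1) * ‖ξ‖ ^ 2 := by
  have hradial := (hasFDerivAt_one_add_norm_sq_rpow_smul (p - 1) z).differentiableAt
  rw [gradient_add_const_mul_one_add_norm_sq_rpow (hf.differentiable (by norm_num)),
    fderiv_fun_add (hf.differentiable_gradient z) (hradial.fun_const_smul _),
    fderiv_fun_const_smul hradial, add_apply,
    smul_apply, inner_add_left, real_inner_smul_left]
  have hcoef : 0 ≤ 2 * κ * p := by positivity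
  calc _ ≤ ⟪fderiv ℝ (gradient f) z ξ, ξ⟫
        + 2 * κ * p * ((1 + 2 * (p - 1)) * (1 + ‖z‖ ^ 2) ^ (p - 1) * ‖ξ‖ ^ 2) := by
        gcongr
        exact inner_fderiv_one_add_norm_sq_rpow_smul_le (sub_nonneg.2 hp) z ξ
    _ = _ := by ring

end Radial

theorem Real.rpow_sub_one_mul_le_rpow_add_rpow {t s p : ℝ} (ht : 0 ≤ t) (hs : 0 ≤ s)
    (hp : 1 ≤ p) : t ^ (p - 1) * s ≤ t ^ p + s ^ p := by
  set m := max t s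
  have hm : 0 ≤ m := ht.trans (le_max_left t s)
  calc t ^ (p - 1) * s ≤ m ^ (p - 1) * m :=
        mul_le_mul (Real.rpow_le_rpow ht (le_max_left t s) (by linarith)) (le_max_right t s) hs
          (Real.rpow_nonneg hm _)
    _ = m ^ p := by rw [← Real.rpow_add_one' hm (by linarith), sub_add_cancel]
    _ ≤ t ^ p + s ^ p := by
        rcases max_choice t s with h | h <;> simp only [m, h] <;>
          linarith [Real.rpow_nonneg ht p, Real.rpow_nonneg hs p]

theorem Real.rpow_half_sub_one_mul_sq_le {t x : ℝ} (ht : 0 ≤ t) (hx : 0 ≤ x) {k : ℕ}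
    (hk : 2 ≤ k) : t ^ ((k : ℝ) / 2 - 1) * x ^ 2 ≤ t ^ ((k : ℝ) / 2) + x ^ k := by
  have hsq : (x ^ 2) ^ ((k : ℝ) / 2) = x ^ k := by
    rw [← Real.rpow_natCast x 2, ← Real.rpow_mul hx, Nat.cast_ofNat,
      mul_div_cancel₀ _ two_ne_zero, Real.rpow_natCast]
  have hk' : (2 : ℝ) ≤ k := by exact_mod_cast hk
  rw [← hsq]
  exact Real.rpow_sub_one_mul_le_rpow_add_rpow ht (sq_nonneg x) (by linarith)

section Euclidean

variable {ι κ : Type*} [Fintype ι] [Fintype κ]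

noncomputable def outerProd (a : EuclideanSpace ℝ ι) (b : EuclideanSpace ℝ κ) :
    EuclideanSpace ℝ (ι × κ) :=
  (EuclideanSpace.equiv (ι × κ) ℝ).symm fun p => a p.1 * b p.2

theorem norm_outerProd (a : EuclideanSpace ℝ ι) (b : EuclideanSpace ℝ κ) :
    ‖outerProd a b‖ = ‖a‖ * ‖b‖ := by
  rw [← pow_left_inj₀ (norm_nonneg _) (by positivity) two_ne_zero, mul_pow,
    EuclideanSpace.real_norm_sq_eq, EuclideanSpace.real_norm_sq_eq,
    EuclideanSpace.real_norm_sq_eq, Fintype.sum_prod_type, Finset.sum_mul_sum]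
  simp [outerProd, mul_pow]

end Euclidean

theorem symProd_eq_smul_add_outerProd {n : ℕ} (a b : EuclideanSpace ℝ (Fin n)) :
    symProd a b = (2 : ℝ)⁻¹ • (outerProd a b + outerProd b a) := by
  ext p
  simp only [symProd, PiLp.continuousLinearEquiv_symm_apply, outerProd, smul_add,
    PiLp.add_apply, PiLp.smul_apply, smul_eq_mul]
  ring

theorem norm_symProd_le {n : ℕ} (a b : EuclideanSpace ℝ (Fin n)) :
    ‖symProd a b‖ ≤ ‖a‖ * ‖b‖ := by
  rw [symProd_eq_smul_add_outerProd, norm_smul]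
  calc ‖(2 : ℝ)⁻¹‖ * ‖outerProd a b + outerProd b a‖
      ≤ 2⁻¹ * (‖outerProd a b‖ + ‖outerProd b a‖) := by
        rw [Real.norm_of_nonneg (by norm_num)]; gcongr; exact norm_add_le _ _
    _ = ‖a‖ * ‖b‖ := by rw [norm_outerProd, norm_outerProd]; ring

theorem norm_matVec_le {n : ℕ} (M : Matrix (Fin n) (Fin n) ℝ) (w : EuclideanSpace ℝ (Fin n)) :
    ‖matVec M w‖ ≤ frobNorm M * ‖w‖ := by
  rw [← pow_le_pow_iff_left₀ (norm_nonneg _) (by unfold frobNorm; positivity) two_ne_zero,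
    mul_pow, frobNorm, Real.sq_sqrt (by positivity), EuclideanSpace.real_norm_sq_eq,
    EuclideanSpace.real_norm_sq_eq, Finset.sum_mul]
  gcongr with i
  simpa [matVec, Matrix.mulVec, dotProduct] using Finset.sum_mul_sq_le_sq_mul_sq _ (M i) w

theorem norm_symProd_matVec_le {n : ℕ} (M : Matrix (Fin n) (Fin n) ℝ)
    (w e : EuclideanSpace ℝ (Fin n)) :
    ‖symProd (matVec M w) e‖ ≤ frobNorm M * (‖w‖ * ‖e‖) :=
  calc ‖symProd (matVec M w) e‖ ≤ ‖matVec M w‖ * ‖e‖ := norm_symProd_le _ _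
    _ ≤ frobNorm M * ‖w‖ * ‖e‖ := by gcongr; exact norm_matVec_le M w
    _ = frobNorm M * (‖w‖ * ‖e‖) := mul_assoc _ _ _

/-- For a `C²` integrand `f` with degenerate elliptic Hessian bounds
`0 ≤ ⟨∇²f(z)ξ,ξ⟩ ≤ Λ|ξ|²/(1+|z|²)^{1/2}` and the perturbed integrand
`f_j(z) = f(z) + (1/(2A_j j²))(1+|z|²)^{(n+1)/2}`, there is a constant `c(n) > 0` such that
`⟨∇²f_j(z)((Mw)⊙e), (Mw)⊙e⟩ ≤ |M|²[Λ|w|²|e|²/(1+|z|²)^{1/2}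
  + (c(n)/(A_j j²))((1+|z|²)^{(n+1)/2} + |w|^{n+1}|e|^{n+1})]`. -/
theorem perturbed_hessian_symProd_bound (n : ℕ) (hn : 1 ≤ n) :
    ∃ c : ℝ, 0 < c ∧
      ∀ (f : EuclideanSpace ℝ (Fin n × Fin n) → ℝ) (Λ A : ℝ) (j : ℕ),
        ContDiff ℝ 2 f → 0 ≤ Λ → 0 < A → 1 ≤ j →
        (∀ z ξ : EuclideanSpace ℝ (Fin n × Fin n),
          0 ≤ ⟪fderiv ℝ (gradient f) z ξ, ξ⟫ ∧
          ⟪fderiv ℝ (gradient f) z ξ, ξ⟫ ≤ Λ * ‖ξ‖ ^ 2 / (1 + ‖z‖ ^ 2) ^ ((1 : ℝ) / 2)) →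
        ∀ (w e : EuclideanSpace ℝ (Fin n)) (M : Matrix (Fin n) (Fin n) ℝ)
          (z : EuclideanSpace ℝ (Fin n × Fin n)),
          ⟪fderiv ℝ (gradient (fun y => f y
              + (1 / (2 * A * (j : ℝ) ^ 2)) * (1 + ‖y‖ ^ 2) ^ (((n : ℝ) + 1) / 2))) z
              (symProd (matVec M w) e), symProd (matVec M w) e⟫
            ≤ frobNorm M ^ 2 *
                (Λ * ‖w‖ ^ 2 * ‖e‖ ^ 2 / (1 + ‖z‖ ^ 2) ^ ((1 : ℝ) / 2)
                  + c / (A * (j : ℝ) ^ 2) *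
                    ((1 + ‖z‖ ^ 2) ^ (((n : ℝ) + 1) / 2) + ‖w‖ ^ (n + 1) * ‖e‖ ^ (n + 1))) := by
  have hn' : (1 : ℝ) ≤ n := by exact_mod_cast hn
  refine ⟨n * (n + 1) / 2, by positivity, fun f Λ A j hf hΛ hA hj hHess w e M z => ?_⟩
  have hAj : 0 < A * (j : ℝ) ^ 2 := by
    have : (0 : ℝ) < j := by exact_mod_cast hj
    positivity
  set ξ := symProd (matVec M w) e
  set T := 1 + ‖z‖ ^ 2
  set C : ℝ := n * (n + 1) / 2 / (A * j ^ 2)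
  set F := frobNorm M * (‖w‖ * ‖e‖)
  have hξ : ‖ξ‖ ^ 2 ≤ F ^ 2 := pow_le_pow_left₀ (norm_nonneg _) (norm_symProd_matVec_le M w e) 2
  have hyoung : T ^ (((n : ℝ) + 1) / 2 - 1) * (‖w‖ * ‖e‖) ^ 2
      ≤ T ^ (((n : ℝ) + 1) / 2) + ‖w‖ ^ (n + 1) * ‖e‖ ^ (n + 1) := by
    simpa [mul_pow] using Real.rpow_half_sub_one_mul_sq_le (t := T) (x := ‖w‖ * ‖e‖)
      (k := n + 1) (by positivity) (by positivity) (by omega)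
  have hperturb := inner_fderiv_gradient_add_const_mul_one_add_norm_sq_rpow_le hf
    (κ := 1 / (2 * A * (j : ℝ) ^ 2)) (p := ((n : ℝ) + 1) / 2) (by positivity) (by linarith) z ξ
  have hcoef : 2 * (1 / (2 * A * (j : ℝ) ^ 2)) * (((n : ℝ) + 1) / 2)
      * (2 * (((n : ℝ) + 1) / 2) - 1) = C := by
    simp only [C]
    field_simp
    ring
  rw [hcoef] at hperturb
  calc _ ≤ Λ * ‖ξ‖ ^ 2 / T ^ ((1 : ℝ) / 2) + C * T ^ (((n : ℝ) + 1) / 2 - 1) * ‖ξ‖ ^ 2 :=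
        hperturb.trans (by gcongr; exact (hHess z ξ).2)
    _ ≤ Λ * F ^ 2 / T ^ ((1 : ℝ) / 2) + C * T ^ (((n : ℝ) + 1) / 2 - 1) * F ^ 2 := by gcongr
    _ = frobNorm M ^ 2 * (Λ * ‖w‖ ^ 2 * ‖e‖ ^ 2 / T ^ ((1 : ℝ) / 2)
          + C * (T ^ (((n : ℝ) + 1) / 2 - 1) * (‖w‖ * ‖e‖) ^ 2)) := by ring
    _ ≤ _ := by gcongr
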